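/- arXiv:2404.08963 — 8 statements merged into one kernel-verified Lean document; each statement's English description precedes it below -/
import Mathlib

section
/- Let f be a strategyproof and anonymous two-agent mechanism for an environment with two facilities at ℓ_1 < ℓ_2. For any profile x = (x_1, x_2) with x_1 < x_2, if the open intervals (x_1, x_2) and (ℓ_1, ℓ_2) are disjoint, then both agents are assigned to the same facility: f_1(x) = f_2(x). -/
/-- Number of agents assigned to facility `j` under assignment `s`
(two agents, two facilities; facility 1 is index `0`, facility 2 is index `1`). -/
def facCount (s : Fin 2 → Fin 2) (j : Fin 2) : ℕ :=
  (Finset.univ.filter fun i => s i = j).card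

/-- Cost of an agent with true position `y` under assignment `s`, being agent `i`. -/
noncomputable def agentCost (ℓ bc : Fin 2 → ℝ) (y : ℝ)
    (s : Fin 2 → Fin 2) (i : Fin 2) : ℝ :=
  |y - ℓ (s i)| + bc (s i) / (facCount s (s i) : ℝ)

/-- A two-agent mechanism is strategyproof if no agent can decrease her (true)
cost by misreporting her position. -/
def Strategyproof (ℓ bc : Fin 2 → ℝ)
    (f : (Fin 2 → ℝ) → Fin 2 → Fin 2) : Prop :=
  ∀ (x : Fin 2 → ℝ) (i : Fin 2) (xi' : ℝ),
    agentCost ℓ bc (x i) (f x) i ≤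
      agentCost ℓ bc (x i) (f (Function.update x i xi')) i

/-- A two-agent mechanism is anonymous: `f(x₂, x₁) = (f₂(x₁,x₂), f₁(x₁,x₂))`. -/
def Anonymous (f : (Fin 2 → ℝ) → Fin 2 → Fin 2) : Prop :=
  ∀ x₁ x₂ : ℝ,
    f ![x₂, x₁] 0 = f ![x₁, x₂] 1 ∧ f ![x₂, x₁] 1 = f ![x₁, x₂] 0

lemma facCount_apply_of_ne {s : Fin 2 → Fin 2} (hs : s 0 ≠ s 1) (i : Fin 2) :
    facCount s (s i) = 1 := by
  rw [facCount, Finset.card_filter, Fin.sum_univ_two]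
  fin_cases i <;> simp [hs, Ne.symm hs]

lemma facCount_apply_of_eq {s : Fin 2 → Fin 2} (hs : s 0 = s 1) (i : Fin 2) :
    facCount s (s i) = 2 := by
  rw [facCount, Finset.card_filter, Fin.sum_univ_two]
  fin_cases i <;> simp [hs]

lemma agentCost_of_ne {s : Fin 2 → Fin 2} (hs : s 0 ≠ s 1) (ℓ bc : Fin 2 → ℝ) (y : ℝ)
    (i : Fin 2) : agentCost ℓ bc y s i = |y - ℓ (s i)| + bc (s i) := by
  simp [agentCost, facCount_apply_of_ne hs]

lemma agentCost_of_eq {s : Fin 2 → Fin 2} (hs : s 0 = s 1) (ℓ bc : Fin 2 → ℝ) (y : ℝ)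
    (i : Fin 2) : agentCost ℓ bc y s i = |y - ℓ (s i)| + bc (s i) / 2 := by
  simp [agentCost, facCount_apply_of_eq hs]

lemma Anonymous.apply_diag {f : (Fin 2 → ℝ) → Fin 2 → Fin 2} (han : Anonymous f) (y : ℝ) :
    f ![y, y] 0 = f ![y, y] 1 :=
  (han y y).1

/-- Agent 1 can report agent 2's position; by anonymity both then share one facility, which cannot
be agent 1's own (sharing it would halve her fee), so it is agent 2's. -/
theorem Strategyproof.abs_sub_add_le_of_ne {ℓ bc : Fin 2 → ℝ} {f : (Fin 2 → ℝ) → Fin 2 → Fin 2}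
    (hsp : Strategyproof ℓ bc f) (han : Anonymous f) (hb : ∀ j, 0 < bc j) {a b : ℝ}
    (hne : f ![a, b] 0 ≠ f ![a, b] 1) :
    |a - ℓ (f ![a, b] 0)| + bc (f ![a, b] 0) ≤ |a - ℓ (f ![a, b] 1)| + bc (f ![a, b] 1) / 2 := by
  have hdev : Function.update ![a, b] 0 b = ![b, b] := by
    ext i; fin_cases i <;> simp
  have hsp₀ := hsp ![a, b] 0 b
  rw [hdev, agentCost_of_ne hne, agentCost_of_eq (han.apply_diag b)] at hsp₀
  simp only [Matrix.cons_val_zero] at hsp₀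
  have hjoin : f ![b, b] 0 ≠ f ![a, b] 0 := by
    intro h
    rw [h] at hsp₀
    linarith [hb (f ![a, b] 0)]
  have : f ![b, b] 0 = f ![a, b] 1 := by omega
  rwa [this] at hsp₀

lemma le_or_le_of_Ioo_inter_Ioo_eq_empty {a b t u : ℝ} (hab : a < b) (htu : t < u)
    (h : Set.Ioo a b ∩ Set.Ioo t u = ∅) : b ≤ t ∨ u ≤ a := by
  rw [Set.Ioo_inter_Ioo, Set.Ioo_eq_empty_iff, lt_min_iff, max_lt_iff, max_lt_iff] at h
  by_contra! h'
  exact h ⟨⟨hab, h'.1⟩, h'.2, htu⟩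

lemma abs_sub_add_abs_sub_comm_of_Ioo_inter_Ioo_eq_empty {a b t u : ℝ} (hab : a < b)
    (htu : t < u) (h : Set.Ioo a b ∩ Set.Ioo t u = ∅) :
    |a - t| + |b - u| = |a - u| + |b - t| := by
  rcases le_or_le_of_Ioo_inter_Ioo_eq_empty hab htu h with h | h
  · rw [abs_of_nonpos, abs_of_nonpos, abs_of_nonpos, abs_of_nonpos] <;> linarith
  · rw [abs_of_nonneg, abs_of_nonneg, abs_of_nonneg, abs_of_nonneg] <;> linarith

/-- Summing the two agents' deviation inequalities, the distance terms cancel because both agents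
lie on the same side of both facilities, leaving `(b₁ + b₂) / 2 ≤ 0`. -/
theorem sp_anonymous_P4 (ℓ bc : Fin 2 → ℝ) (hℓ : ℓ 0 < ℓ 1) (hb : ∀ j, 0 < bc j)
    (f : (Fin 2 → ℝ) → Fin 2 → Fin 2)
    (hsp : Strategyproof ℓ bc f) (han : Anonymous f)
    (x₁ x₂ : ℝ) (hx : x₁ < x₂)
    (hdisj : Set.Ioo x₁ x₂ ∩ Set.Ioo (ℓ 0) (ℓ 1) = ∅) :
    f ![x₁, x₂] 0 = f ![x₁, x₂] 1 := by
  by_contra hne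
  obtain ⟨hswap₀, hswap₁⟩ := han x₁ x₂
  have h₁ := hsp.abs_sub_add_le_of_ne han hb hne
  have h₂ := hsp.abs_sub_add_le_of_ne han hb (a := x₂) (b := x₁)
    (by rwa [hswap₀, hswap₁, ne_comm])
  rw [hswap₀, hswap₁] at h₂
  have hdist := abs_sub_add_abs_sub_comm_of_Ioo_inter_Ioo_eq_empty hx hℓ hdisj
  have hassign : f ![x₁, x₂] 0 = 0 ∧ f ![x₁, x₂] 1 = 1 ∨
      f ![x₁, x₂] 0 = 1 ∧ f ![x₁, x₂] 1 = 0 := by omega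
  rcases hassign with ⟨hs₁, hs₂⟩ | ⟨hs₁, hs₂⟩ <;> rw [hs₁, hs₂] at h₁ h₂ <;>
    linarith [hb 0, hb 1]
end

section
/- Let f be a strategyproof and anonymous two-agent mechanism for an environment with two facilities at ℓ_1 < ℓ_2. For any profile x = (x_1, x_2) with x_1 < x_2, if the open intervals (x_1, x_2) and (ℓ_1, ℓ_2) intersect, then f(x) ≠ (2, 1), i.e., it is not the case that the left agent is assigned to the right facility and the right agent to the left facility. -/
lemma facCount_eq (s : Fin 2 → Fin 2) (j : Fin 2) :
    facCount s j = (if s 0 = j then 1 else 0) + (if s 1 = j then 1 else 0) := by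
  rw [facCount, Finset.card_filter, Fin.sum_univ_two]

/-- Property (P5): if the open interval between the two agents intersects the
open interval between the two facilities, then the outcome is not `(2, 1)`,
i.e., the left agent at facility 2 and the right agent at facility 1. -/
theorem sp_anonymous_P5 (ℓ bc : Fin 2 → ℝ) (hℓ : ℓ 0 < ℓ 1) (hb : ∀ j, 0 < bc j)
    (f : (Fin 2 → ℝ) → Fin 2 → Fin 2)
    (hsp : Strategyproof ℓ bc f) (han : Anonymous f)
    (x₁ x₂ : ℝ) (hx : x₁ < x₂)
    (hint : (Set.Ioo x₁ x₂ ∩ Set.Ioo (ℓ 0) (ℓ 1)).Nonempty) :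
    ¬ (f ![x₁, x₂] 0 = 1 ∧ f ![x₁, x₂] 1 = 0) := by
  rintro ⟨h0, h1⟩
  obtain ⟨p, ⟨hp1, hp2⟩, hp3, hp4⟩ := hint
  have two01 : ∀ a : Fin 2, a = 0 ∨ a = 1 := by decide
  -- update equalities
  have hu1 : Function.update ![x₁, x₂] 0 x₂ = ![x₂, x₂] := by
    funext i; fin_cases i <;> simp [Function.update]
  have hu2 : Function.update ![x₁, x₂] 1 x₁ = ![x₁, x₁] := by
    funext i; fin_cases i <;> simp [Function.update]
  -- count at the original profile
  have hc1 : facCount (f ![x₁, x₂]) 1 = 1 := by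
    rw [facCount_eq, h0, h1]; decide
  have hc0 : facCount (f ![x₁, x₂]) 0 = 1 := by
    rw [facCount_eq, h0, h1]; decide
  -- on equal profiles, anonymity forces the same facility for both agents
  have ht : f ![x₂, x₂] 1 = f ![x₂, x₂] 0 := (han x₂ x₂).2
  have hu : f ![x₁, x₁] 1 = f ![x₁, x₁] 0 := (han x₁ x₁).2
  have hct : facCount (f ![x₂, x₂]) (f ![x₂, x₂] 0) = 2 := by
    rw [facCount_eq, ht]; simp
  have hcu : facCount (f ![x₁, x₁]) (f ![x₁, x₁] 0) = 2 := by
    rw [facCount_eq, hu]; simp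
  -- SP inequality for agent 1 deviating to x₂
  have hA := hsp ![x₁, x₂] 0 x₂
  rw [hu1] at hA
  simp only [agentCost, Matrix.cons_val_zero, h0, hc1] at hA
  rw [hct] at hA
  -- SP inequality for agent 2 deviating to x₁
  have hB := hsp ![x₁, x₂] 1 x₁
  rw [hu2] at hB
  simp only [agentCost, Matrix.cons_val_one, Matrix.head_cons, h1, hc0, hu] at hB
  rw [hcu] at hB
  norm_num at hA hB
  have hb0 := hb 0
  have hb1 := hb 1
  rcases two01 (f ![x₂, x₂] 0) with hj | hj <;>
    rcases two01 (f ![x₁, x₁] 0) with hk | hk <;>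
      rw [hj] at hA <;> rw [hk] at hB
  · -- j = 0, k = 0 : agent 2 gets immediate contradiction
    have h2 : ℓ 0 - x₂ ≤ |x₂ - ℓ 0| := by
      rw [abs_sub_comm]; exact le_abs_self _
    have h3 : x₂ - ℓ 0 ≤ |x₂ - ℓ 0| := le_abs_self _
    linarith [le_abs_self (x₂ - ℓ 0)]
  · -- j = 0, k = 1 : the interesting case
    have e1 : ℓ 1 - x₁ ≤ |x₁ - ℓ 1| := by rw [abs_sub_comm]; exact le_abs_self _
    have e2 : x₂ - ℓ 0 ≤ |x₂ - ℓ 0| := le_abs_self _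
    have e3 : |x₁ - ℓ 0| ≤ |x₁ - p| + |p - ℓ 0| := abs_sub_le x₁ p (ℓ 0)
    have e4 : |x₂ - ℓ 1| ≤ |x₂ - p| + |p - ℓ 1| := abs_sub_le x₂ p (ℓ 1)
    have e5 : |x₁ - p| = p - x₁ := by rw [abs_sub_comm]; exact abs_of_pos (by linarith)
    have e6 : |p - ℓ 0| = p - ℓ 0 := abs_of_pos (by linarith)
    have e7 : |x₂ - p| = x₂ - p := abs_of_pos (by linarith)
    have e8 : |p - ℓ 1| = ℓ 1 - p := by rw [abs_sub_comm]; exact abs_of_pos (by linarith)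
    linarith
  · -- j = 1, k = 0 : both immediate contradictions
    linarith
  · -- j = 1, k = 1 : agent 1 immediate contradiction
    linarith
end

section
/- Let f be a strategyproof and anonymous two-agent mechanism for an environment with two facilities at ℓ_1 < ℓ_2. If there exists a profile (x̂_1, x̂_2) with x̂_1 < x̂_2 such that f_1(x̂_1, x̂_2) ≠ f_2(x̂_1, x̂_2), then f_2(x, x̂_2) = 2 for every x ≤ x̂_2 and f_1(x̂_1, x) = 1 for every x ≥ x̂_1. -/
lemma agentCost_eq (ℓ bc : Fin 2 → ℝ) (y : ℝ) (s : Fin 2 → Fin 2) (i : Fin 2) :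
    agentCost ℓ bc y s i = |y - ℓ (s i)| +
      bc (s i) / (((if s 0 = s i then 1 else 0) + (if s 1 = s i then 1 else 0) : ℕ) : ℝ) := by
  rw [agentCost, facCount_eq]

lemma update_fst (x1 x2 x' : ℝ) : Function.update ![x1, x2] 0 x' = ![x', x2] := by
  funext i; fin_cases i <;> simp [Function.update]

lemma update_snd (x1 x2 x' : ℝ) : Function.update ![x1, x2] 1 x' = ![x1, x'] := by
  funext i; fin_cases i <;> simp [Function.update]

/-- rearrangement: crossing distances are at least straight distances. -/
lemma rearr (a b c d : ℝ) (hab : a ≤ b) (hcd : c ≤ d) :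
    |a - c| + |b - d| ≤ |a - d| + |b - c| := by
  rcases abs_cases (a - c) with ⟨h1, h1'⟩ | ⟨h1, h1'⟩ <;>
  rcases abs_cases (b - d) with ⟨h2, h2'⟩ | ⟨h2, h2'⟩ <;>
  rcases abs_cases (a - d) with ⟨h3, h3'⟩ | ⟨h3, h3'⟩ <;>
  rcases abs_cases (b - c) with ⟨h4, h4'⟩ | ⟨h4, h4'⟩ <;>
  linarith

/-- If the two agents of some profile are assigned to different facilities,
then the right agent is always assigned to facility 2 when the left agent moves
(weakly) left of her, and the left agent is always assigned to facility 1 when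
the right agent moves (weakly) right of her. -/
theorem sp_anonymous_split_ray (ℓ bc : Fin 2 → ℝ) (hℓ : ℓ 0 < ℓ 1)
    (hb : ∀ j, 0 < bc j)
    (f : (Fin 2 → ℝ) → Fin 2 → Fin 2)
    (hsp : Strategyproof ℓ bc f) (han : Anonymous f)
    (xh₁ xh₂ : ℝ) (hx : xh₁ < xh₂)
    (hdiff : f ![xh₁, xh₂] 0 ≠ f ![xh₁, xh₂] 1) :
    (∀ x : ℝ, x ≤ xh₂ → f ![x, xh₂] 1 = 1) ∧
    (∀ x : ℝ, xh₁ ≤ x → f ![xh₁, x] 0 = 0) := by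
  have fin2 : ∀ v : Fin 2, v ≠ 0 → v = 1 := by intro v h; omega
  have fin2' : ∀ v : Fin 2, v ≠ 1 → v = 0 := by intro v h; omega
  -- strategyproofness specialized to each coordinate
  have sp1 : ∀ x1 x2 x' : ℝ,
      agentCost ℓ bc x1 (f ![x1, x2]) 0 ≤ agentCost ℓ bc x1 (f ![x', x2]) 0 := by
    intro x1 x2 x'
    have h := hsp ![x1, x2] 0 x'
    rw [update_fst] at h
    simpa using h
  have sp2 : ∀ x1 x2 x' : ℝ,
      agentCost ℓ bc x2 (f ![x1, x2]) 1 ≤ agentCost ℓ bc x2 (f ![x1, x']) 1 := by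
    intro x1 x2 x'
    have h := hsp ![x1, x2] 1 x'
    rw [update_snd] at h
    simpa using h
  -- on diagonal profiles both agents get the same facility
  have diag : ∀ y : ℝ, f ![y, y] 1 = f ![y, y] 0 := fun y => ((han y y).1).symm
  -- Step 1: the split must be (left → facility 0, right → facility 1)
  have h0 : f ![xh₁, xh₂] 0 = 0 := by
    by_contra hc
    have h0' : f ![xh₁, xh₂] 0 = 1 := fin2 _ hc
    have h1' : f ![xh₁, xh₂] 1 = 0 := by
      have := hdiff; rw [h0'] at this; exact fin2' _ (Ne.symm this)
    -- diagonal at xh₂ must be facility 0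
    have hB : f ![xh₂, xh₂] 0 = 0 := by
      by_contra hB1
      have hB1' : f ![xh₂, xh₂] 0 = 1 := fin2 _ hB1
      have hB1'' : f ![xh₂, xh₂] 1 = 1 := by rw [diag, hB1']
      have k := sp1 xh₁ xh₂ xh₂
      rw [agentCost_eq, agentCost_eq] at k
      simp [h0', h1', hB1', hB1''] at k
      have := hb 1
      linarith
    have hB' : f ![xh₂, xh₂] 1 = 0 := by rw [diag, hB]
    -- diagonal at xh₁ must be facility 1
    have hA : f ![xh₁, xh₁] 0 = 1 := by
      by_contra hA1
      have hA0 : f ![xh₁, xh₁] 0 = 0 := fin2' _ hA1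
      have hA0' : f ![xh₁, xh₁] 1 = 0 := by rw [diag, hA0]
      have k := sp2 xh₁ xh₂ xh₁
      rw [agentCost_eq, agentCost_eq] at k
      simp [h0', h1', hA0, hA0'] at k
      have := hb 0
      linarith
    have hA' : f ![xh₁, xh₁] 1 = 1 := by rw [diag, hA]
    -- two SP inequalities
    have k1 := sp1 xh₁ xh₂ xh₂
    rw [agentCost_eq, agentCost_eq] at k1
    simp [h0', h1', hB, hB'] at k1
    have k2 := sp2 xh₁ xh₂ xh₁
    rw [agentCost_eq, agentCost_eq] at k2
    simp [h0', h1', hA, hA'] at k2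
    -- contradiction via rearrangement
    have hr := rearr xh₁ xh₂ (ℓ 0) (ℓ 1) hx.le hℓ.le
    have := hb 0
    have := hb 1
    linarith
  have h1 : f ![xh₁, xh₂] 1 = 1 := by
    have := hdiff; rw [h0] at this; exact fin2 _ (Ne.symm this)
  -- Step 2: diagonal at xh₂ shares facility 1, diagonal at xh₁ shares facility 0
  have hB0 : f ![xh₂, xh₂] 0 = 1 := by
    by_contra hc
    have hB : f ![xh₂, xh₂] 0 = 0 := fin2' _ hc
    have hB' : f ![xh₂, xh₂] 1 = 0 := by rw [diag, hB]
    have k := sp1 xh₁ xh₂ xh₂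
    rw [agentCost_eq, agentCost_eq] at k
    simp [h0, h1, hB, hB'] at k
    have := hb 0
    linarith
  have hB1 : f ![xh₂, xh₂] 1 = 1 := by rw [diag, hB0]
  have hA0 : f ![xh₁, xh₁] 0 = 0 := by
    by_contra hc
    have hA : f ![xh₁, xh₁] 0 = 1 := fin2 _ hc
    have hA' : f ![xh₁, xh₁] 1 = 1 := by rw [diag, hA]
    have k := sp2 xh₁ xh₂ xh₁
    rw [agentCost_eq, agentCost_eq] at k
    simp [h0, h1, hA, hA'] at k
    have := hb 1
    linarith
  have hA1 : f ![xh₁, xh₁] 1 = 0 := by rw [diag, hA0]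
  constructor
  · -- Claim A
    intro x _
    by_contra hc
    have hx1 : f ![x, xh₂] 1 = 0 := fin2' _ hc
    rcases eq_or_ne (f ![x, xh₂] 0) 0 with hx0 | hx0
    · -- both at facility 0: agent 1 at (xh₁, xh₂) would deviate to x
      have k := sp1 xh₁ xh₂ x
      rw [agentCost_eq, agentCost_eq] at k
      simp [h0, h1, hx0, hx1] at k
      have := hb 0
      linarith
    · have hx0' : f ![x, xh₂] 0 = 1 := fin2 _ hx0
      -- anonymity: at (xh₂, x), agent 2 (position x) gets facility 1 alone
      have hsw := han x xh₂
      have hw0 : f ![xh₂, x] 0 = 0 := by rw [hsw.1, hx1]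
      have hw1 : f ![xh₂, x] 1 = 1 := by rw [hsw.2, hx0']
      -- she deviates to xh₂, sharing facility 1
      have k := sp2 xh₂ x xh₂
      rw [agentCost_eq, agentCost_eq] at k
      simp [hw0, hw1, hB0, hB1] at k
      have := hb 1
      linarith
  · -- Claim B
    intro x _
    by_contra hc
    have hx0 : f ![xh₁, x] 0 = 1 := fin2 _ hc
    rcases eq_or_ne (f ![xh₁, x] 1) 1 with hx1 | hx1
    · -- both at facility 1: agent 2 at (xh₁, xh₂) would deviate to x
      have k := sp2 xh₁ xh₂ x
      rw [agentCost_eq, agentCost_eq] at k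
      simp [h0, h1, hx0, hx1] at k
      have := hb 1
      linarith
    · have hx1' : f ![xh₁, x] 1 = 0 := fin2' _ hx1
      -- anonymity: at (x, xh₁), agent 1 (position x) gets facility 0 alone
      have hsw := han xh₁ x
      have hw0 : f ![x, xh₁] 0 = 0 := by rw [hsw.1, hx1']
      have hw1 : f ![x, xh₁] 1 = 1 := by rw [hsw.2, hx0]
      -- she deviates to xh₁, sharing facility 0
      have k := sp1 x xh₁ xh₁
      rw [agentCost_eq, agentCost_eq] at k
      simp [hw0, hw1, hA0, hA1] at k
      have := hb 0
      linarith
end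

section
/- Let f be a strategyproof and anonymous two-agent mechanism for an environment with two facilities at ℓ_1 < ℓ_2, and set M = Δ/2 + b_2/4 − b_1/4 where Δ = ℓ_2 − ℓ_1. If M ≠ 0 and M ≠ Δ, then: (i) there exists j ∈ {1,2} such that f(x_1, x_2) = (j, j) for all profiles with x_1 ≤ x_2 ≤ ℓ_1; and (ii) there exists j' ∈ {1,2} such that f(x_1, x_2) = (j', j') for all profiles with ℓ_2 ≤ x_1 ≤ x_2. -/
/- ================= auxiliary material ================= -/

lemma fin2cases (k : Fin 2) : k = 0 ∨ k = 1 := by omega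

/-- Position-independent part of the cost of agent `i` under assignment `s`,
relative to an "edge distance" vector `e`. -/
noncomputable def Ofun (bc e : Fin 2 → ℝ) (s : Fin 2 → Fin 2) (i : Fin 2) : ℝ :=
  e (s i) + bc (s i) / (facCount s (s i) : ℝ)

lemma Ofun_shared (bc e : Fin 2 → ℝ) (s : Fin 2 → Fin 2) (p : Fin 2)
    (h0 : s 0 = p) (h1 : s 1 = p) (i : Fin 2) :
    Ofun bc e s i = e p + bc p / 2 := by
  have hsi : s i = p := by rcases fin2cases i with h | h <;> rw [h] <;> assumption
  have hc : facCount s p = 2 := by rw [facCount_eq, h0, h1]; simp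
  rw [Ofun, hsi, hc]
  norm_num

lemma pin_arith (e bc : Fin 2 → ℝ) (hb : ∀ j, 0 < bc j)
    (hne : e 0 + bc 0 / 2 ≠ e 1 + bc 1 / 2)
    (s : Fin 2 → Fin 2) (p q : Fin 2)
    (h0 : Ofun bc e s 0 = e p + bc p / 2)
    (h1 : Ofun bc e s 1 = e q + bc q / 2) :
    p = q ∧ s 0 = p ∧ s 1 = p := by
  have hb0 := hb 0
  have hb1 := hb 1
  rcases fin2cases (s 0) with hs0 | hs0 <;> rcases fin2cases (s 1) with hs1 | hs1 <;>
  rcases fin2cases p with hp | hp <;> rcases fin2cases q with hq | hq <;>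
  subst hp <;> subst hq <;>
  rw [Ofun, hs0] at h0 <;> rw [Ofun, hs1] at h1 <;>
  rw [facCount_eq, hs0, hs1] at h0 h1 <;>
  norm_num at h0 h1 <;>
  first
    | exact ⟨rfl, hs0, hs1⟩
    | (exfalso; exact hne (by linarith))

lemma O_pin (ℓ bc : Fin 2 → ℝ) (f : (Fin 2 → ℝ) → Fin 2 → Fin 2)
    (hsp : Strategyproof ℓ bc f)
    (R : ℝ → Prop) (base : ℝ → ℝ) (e : Fin 2 → ℝ)
    (hcost : ∀ y, R y → ∀ s i, agentCost ℓ bc y s i = base y + Ofun bc e s i)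
    {u v : ℝ} (hu : R u) (hv : R v) :
    Ofun bc e (f ![u, v]) 0 = Ofun bc e (f ![v, v]) 0 ∧
    Ofun bc e (f ![u, v]) 1 = Ofun bc e (f ![u, u]) 1 := by
  have upd0 : ∀ a b c : ℝ, Function.update ![a, b] 0 c = ![c, b] := by
    intro a b c; funext i; fin_cases i <;> simp [Function.update]
  have upd1 : ∀ a b c : ℝ, Function.update ![a, b] 1 c = ![a, c] := by
    intro a b c; funext i; fin_cases i <;> simp [Function.update]
  have e1 := hsp ![u, v] 0 v
  have e2 := hsp ![v, v] 0 u
  have e3 := hsp ![u, v] 1 u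
  have e4 := hsp ![u, u] 1 v
  rw [upd0] at e1 e2
  rw [upd1] at e3 e4
  simp only [Matrix.cons_val_zero, Matrix.cons_val_one, Matrix.head_cons] at e1 e2 e3 e4
  simp only [hcost u hu] at e1 e4
  simp only [hcost v hv] at e2 e3
  constructor <;> linarith

lemma main_aux (ℓ bc : Fin 2 → ℝ) (hb : ∀ j, 0 < bc j)
    (f : (Fin 2 → ℝ) → Fin 2 → Fin 2)
    (hsp : Strategyproof ℓ bc f) (han : Anonymous f)
    (R : ℝ → Prop) (base : ℝ → ℝ) (e : Fin 2 → ℝ)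
    (hcost : ∀ y, R y → ∀ s i, agentCost ℓ bc y s i = base y + Ofun bc e s i)
    (hne : e 0 + bc 0 / 2 ≠ e 1 + bc 1 / 2)
    (y0 : ℝ) (hy0 : R y0) :
    ∃ j, ∀ u v, R u → R v → ∀ i : Fin 2, f ![u, v] i = j := by
  have diag : ∀ y : ℝ, f ![y, y] 0 = f ![y, y] 1 := fun y => (han y y).1
  refine ⟨f ![y0, y0] 0, ?_⟩
  have hdiagc : ∀ y, R y → f ![y, y] 0 = f ![y0, y0] 0 ∧ f ![y, y] 1 = f ![y0, y0] 0 := by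
    intro y hy
    obtain ⟨h0, h1⟩ := O_pin ℓ bc f hsp R base e hcost hy0 hy
    have h0' : Ofun bc e (f ![y0, y]) 0 = e (f ![y, y] 0) + bc (f ![y, y] 0) / 2 :=
      h0.trans (Ofun_shared bc e _ _ rfl (diag y).symm 0)
    have h1' : Ofun bc e (f ![y0, y]) 1 = e (f ![y0, y0] 0) + bc (f ![y0, y0] 0) / 2 :=
      h1.trans (Ofun_shared bc e _ _ rfl (diag y0).symm 1)
    obtain ⟨hpq, _, _⟩ := pin_arith e bc hb hne _ _ _ h0' h1'
    exact ⟨hpq, (diag y).symm.trans hpq⟩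
  intro u v hu hv i
  obtain ⟨h0, h1⟩ := O_pin ℓ bc f hsp R base e hcost hu hv
  have h0' : Ofun bc e (f ![u, v]) 0 = e (f ![y0, y0] 0) + bc (f ![y0, y0] 0) / 2 :=
    h0.trans (Ofun_shared bc e _ _ (hdiagc v hv).1 (hdiagc v hv).2 0)
  have h1' : Ofun bc e (f ![u, v]) 1 = e (f ![y0, y0] 0) + bc (f ![y0, y0] 0) / 2 :=
    h1.trans (Ofun_shared bc e _ _ (hdiagc u hu).1 (hdiagc u hu).2 1)
  obtain ⟨_, hs0, hs1⟩ := pin_arith e bc hb hne _ _ _ h0' h1'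
  rcases fin2cases i with h | h <;> rw [h] <;> assumption

/- ================= main theorem ================= -/

/-- If `M = Δ/2 + b₂/4 − b₁/4` is neither `0` nor `Δ`, then the mechanism is
constant (assigning both agents to one common facility) on profiles entirely
to the left of `ℓ₁`, and likewise on profiles entirely to the right of `ℓ₂`. -/
theorem sp_anonymous_constant_on_sides (ℓ bc : Fin 2 → ℝ) (hℓ : ℓ 0 < ℓ 1)
    (hb : ∀ j, 0 < bc j)
    (f : (Fin 2 → ℝ) → Fin 2 → Fin 2)
    (hsp : Strategyproof ℓ bc f) (han : Anonymous f)
    (M : ℝ) (hM : M = (ℓ 1 - ℓ 0) / 2 + bc 1 / 4 - bc 0 / 4)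
    (hM0 : M ≠ 0) (hMΔ : M ≠ ℓ 1 - ℓ 0) :
    (∃ j : Fin 2, ∀ x₁ x₂ : ℝ, x₁ ≤ x₂ → x₂ ≤ ℓ 0 →
        ∀ i : Fin 2, f ![x₁, x₂] i = j) ∧
    (∃ j' : Fin 2, ∀ x₁ x₂ : ℝ, ℓ 1 ≤ x₁ → x₁ ≤ x₂ →
        ∀ i : Fin 2, f ![x₁, x₂] i = j') := by
  constructor
  · -- left region
    have hcostL : ∀ y, y ≤ ℓ 0 → ∀ s i,
        agentCost ℓ bc y s i = (ℓ 0 - y) + Ofun bc ![0, ℓ 1 - ℓ 0] s i := by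
      intro y hy s i
      rcases fin2cases (s i) with h | h <;>
        simp only [agentCost, Ofun, h, Matrix.cons_val_zero, Matrix.cons_val_one,
          Matrix.head_cons] <;>
        rw [abs_of_nonpos (by linarith)] <;> ring
    have hneL : (![0, ℓ 1 - ℓ 0] : Fin 2 → ℝ) 0 + bc 0 / 2 ≠
        (![0, ℓ 1 - ℓ 0] : Fin 2 → ℝ) 1 + bc 1 / 2 := by
      simp only [Matrix.cons_val_zero, Matrix.cons_val_one, Matrix.head_cons]
      intro h
      exact hM0 (by rw [hM]; linarith)
    obtain ⟨j, hj⟩ := main_aux ℓ bc hb f hsp han (fun y => y ≤ ℓ 0) (fun y => ℓ 0 - y)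
      ![0, ℓ 1 - ℓ 0] hcostL hneL (ℓ 0) le_rfl
    exact ⟨j, fun x₁ x₂ h12 h2 i => hj x₁ x₂ (le_trans h12 h2) h2 i⟩
  · -- right region
    have hcostR : ∀ y, ℓ 1 ≤ y → ∀ s i,
        agentCost ℓ bc y s i = (y - ℓ 1) + Ofun bc ![ℓ 1 - ℓ 0, 0] s i := by
      intro y hy s i
      rcases fin2cases (s i) with h | h <;>
        simp only [agentCost, Ofun, h, Matrix.cons_val_zero, Matrix.cons_val_one,
          Matrix.head_cons] <;>
        rw [abs_of_nonneg (by linarith)] <;> ring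
    have hneR : (![ℓ 1 - ℓ 0, 0] : Fin 2 → ℝ) 0 + bc 0 / 2 ≠
        (![ℓ 1 - ℓ 0, 0] : Fin 2 → ℝ) 1 + bc 1 / 2 := by
      simp only [Matrix.cons_val_zero, Matrix.cons_val_one, Matrix.head_cons]
      intro h
      exact hMΔ (by rw [hM]; linarith)
    obtain ⟨j, hj⟩ := main_aux ℓ bc hb f hsp han (fun y => ℓ 1 ≤ y) (fun y => y - ℓ 1)
      ![ℓ 1 - ℓ 0, 0] hcostR hneR (ℓ 1) le_rfl
    exact ⟨j, fun x₁ x₂ h1 h12 i => hj x₁ x₂ h1 (le_trans h1 h12) i⟩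
end

section
/- (Type IV mechanisms are strategyproof and anonymous.) Fix an environment with two facilities at ℓ_1 < ℓ_2, building costs b_1, b_2 > 0, and set M = Δ/2 + b_2/4 − b_1/4 where Δ = ℓ_2 − ℓ_1; assume 0 < M < Δ. For any fixed j* ∈ {1,2}, the two-agent mechanism f defined by f(x_1, x_2) = (1,1) if min(x_1, x_2) < ℓ_1 + M, f(x_1, x_2) = (j*, j*) if min(x_1, x_2) = ℓ_1 + M, and f(x_1, x_2) = (2,2) if min(x_1, x_2) > ℓ_1 + M, is strategyproof and anonymous. -/
/-- Type IV mechanisms (threshold `ℓ₁ + M` on the position of the *leftmost*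
agent) are strategyproof and anonymous, provided `0 < M < Δ`. -/
theorem typeIV_strategyproof_anonymous (ℓ bc : Fin 2 → ℝ) (hℓ : ℓ 0 < ℓ 1)
    (hb : ∀ j, 0 < bc j)
    (M : ℝ) (hM : M = (ℓ 1 - ℓ 0) / 2 + bc 1 / 4 - bc 0 / 4)
    (hM0 : 0 < M) (hMΔ : M < ℓ 1 - ℓ 0)
    (jstar : Fin 2)
    (f : (Fin 2 → ℝ) → Fin 2 → Fin 2)
    (hf : ∀ x : Fin 2 → ℝ,
      (min (x 0) (x 1) < ℓ 0 + M → ∀ i : Fin 2, f x i = 0) ∧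
      (min (x 0) (x 1) = ℓ 0 + M → ∀ i : Fin 2, f x i = jstar) ∧
      (ℓ 0 + M < min (x 0) (x 1) → ∀ i : Fin 2, f x i = 1)) :
    Strategyproof ℓ bc f ∧ Anonymous f := by

  have hjs : jstar = 0 ∨ jstar = 1 := by
    fin_cases jstar
    · exact Or.inl rfl
    · exact Or.inr rfl
  set T := ℓ 0 + M with hT
  have lemA : ∀ y : ℝ, y ≤ T → |y - ℓ 0| + bc 0 / 2 ≤ |y - ℓ 1| + bc 1 / 2 := by
    intro y hy
    have h1 : ℓ 1 - y ≤ |y - ℓ 1| := by rw [abs_sub_comm]; exact le_abs_self _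
    rcases abs_cases (y - ℓ 0) with ⟨h, _⟩ | ⟨h, _⟩ <;> rw [h] <;> linarith
  have lemB : ∀ y : ℝ, T ≤ y → |y - ℓ 1| + bc 1 / 2 ≤ |y - ℓ 0| + bc 0 / 2 := by
    intro y hy
    have h1 : y - ℓ 0 ≤ |y - ℓ 0| := le_abs_self _
    rcases abs_cases (y - ℓ 1) with ⟨h, _⟩ | ⟨h, _⟩ <;> rw [h] <;> linarith
  have key : ∀ (y o xi' : ℝ) (j j' : Fin 2),
      ((min y o < T → j = 0) ∧ (min y o = T → j = jstar) ∧ (T < min y o → j = 1)) →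
      ((min xi' o < T → j' = 0) ∧ (min xi' o = T → j' = jstar) ∧ (T < min xi' o → j' = 1)) →
      |y - ℓ j| + bc j / 2 ≤ |y - ℓ j'| + bc j' / 2 := by
    rintro y o xi' j j' ⟨h1, h2, h3⟩ ⟨h1', h2', h3'⟩
    rcases lt_trichotomy (min y o) T with hm | hm | hm <;>
      rcases lt_trichotomy (min xi' o) T with hm' | hm' | hm'
    · rw [h1 hm, h1' hm']
    · rw [h1 hm, h2' hm']
      have ho : T ≤ o := hm' ▸ min_le_right xi' o
      have hy : y < T := by
        rcases min_lt_iff.mp hm with h | h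
        · exact h
        · linarith
      rcases hjs with h | h <;> rw [h]
      · exact lemA y hy.le
    · rw [h1 hm, h3' hm']
      have ho : T < o := lt_of_lt_of_le hm' (min_le_right xi' o)
      have hy : y < T := by
        rcases min_lt_iff.mp hm with h | h
        · exact h
        · linarith
      exact lemA y hy.le
    · rw [h2 hm, h1' hm']
      have hy : T ≤ y := hm ▸ min_le_left y o
      rcases hjs with h | h <;> rw [h]
      · exact lemB y hy
    · rw [h2 hm, h2' hm']
    · rw [h2 hm, h3' hm']
      have ho : T < o := lt_of_lt_of_le hm' (min_le_right xi' o)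
      have hy : y = T := by
        rcases min_choice y o with h | h
        · rw [h] at hm; exact hm
        · rw [h] at hm; exact absurd hm ho.ne'
      rcases hjs with h | h <;> rw [h]
      · exact lemA y hy.le
    · rw [h3 hm, h1' hm']
      have hy : T < y := lt_of_lt_of_le hm (min_le_left y o)
      exact lemB y hy.le
    · rw [h3 hm, h2' hm']
      have hy : T < y := lt_of_lt_of_le hm (min_le_left y o)
      rcases hjs with h | h <;> rw [h]
      · exact lemB y hy.le
    · rw [h3 hm, h3' hm']
  have hconst : ∀ (z : Fin 2 → ℝ) (i : Fin 2), f z i = f z 0 := by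
    intro z i
    obtain ⟨g1, g2, g3⟩ := hf z
    rcases lt_trichotomy (min (z 0) (z 1)) T with h | h | h
    · rw [g1 h i, g1 h 0]
    · rw [g2 h i, g2 h 0]
    · rw [g3 h i, g3 h 0]
  have costEq : ∀ (y : ℝ) (s : Fin 2 → Fin 2) (j : Fin 2), (∀ i, s i = j) → ∀ i : Fin 2,
      agentCost ℓ bc y s i = |y - ℓ j| + bc j / 2 := by
    intro y s j hs i
    have hc : facCount s j = 2 := by
      unfold facCount
      rw [Finset.filter_true_of_mem (fun i _ => hs i), Finset.card_univ, Fintype.card_fin]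
    rw [agentCost, hs i, hc]
    norm_num
  constructor
  · intro x i xi'
    set x' := Function.update x i xi' with hx'
    rw [costEq (x i) (f x) (f x 0) (hconst x) i,
        costEq (x i) (f x') (f x' 0) (hconst x') i]
    obtain ⟨g1, g2, g3⟩ := hf x
    obtain ⟨g1', g2', g3'⟩ := hf x'
    fin_cases i
    · have e0 : x' 0 = xi' := by rw [hx']; simp
      have e1 : x' 1 = x 1 := by rw [hx']; simp
      rw [e0, e1] at g1' g2' g3'
      exact key (x 0) (x 1) xi' (f x 0) (f x' 0)
        ⟨fun h => g1 h 0, fun h => g2 h 0, fun h => g3 h 0⟩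
        ⟨fun h => g1' h 0, fun h => g2' h 0, fun h => g3' h 0⟩
    · have e0 : x' 0 = x 0 := by rw [hx']; simp
      have e1 : x' 1 = xi' := by rw [hx']; simp
      rw [e0, e1] at g1' g2' g3'
      rw [min_comm (x 0) (x 1)] at g1 g2 g3
      rw [min_comm (x 0) xi'] at g1' g2' g3'
      exact key (x 1) (x 0) xi' (f x 0) (f x' 0)
        ⟨fun h => g1 h 0, fun h => g2 h 0, fun h => g3 h 0⟩
        ⟨fun h => g1' h 0, fun h => g2' h 0, fun h => g3' h 0⟩
  · intro x₁ x₂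
    obtain ⟨a1, a2, a3⟩ := hf ![x₂, x₁]
    obtain ⟨b1, b2, b3⟩ := hf ![x₁, x₂]
    have e1 : min (![x₂, x₁] 0) (![x₂, x₁] 1) = min x₁ x₂ := by
      simp [min_comm]
    have e2 : min (![x₁, x₂] 0) (![x₁, x₂] 1) = min x₁ x₂ := by simp
    rw [e1] at a1 a2 a3
    rw [e2] at b1 b2 b3
    rcases lt_trichotomy (min x₁ x₂) T with h | h | h
    · exact ⟨(a1 h 0).trans (b1 h 1).symm, (a1 h 1).trans (b1 h 0).symm⟩
    · exact ⟨(a2 h 0).trans (b2 h 1).symm, (a2 h 1).trans (b2 h 0).symm⟩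
    · exact ⟨(a3 h 0).trans (b3 h 1).symm, (a3 h 1).trans (b3 h 0).symm⟩
end

section
/- (Type V mechanisms are strategyproof and anonymous.) Fix an environment with two facilities at ℓ_1 < ℓ_2, building costs b_1, b_2 > 0, and set M = Δ/2 + b_2/4 − b_1/4 where Δ = ℓ_2 − ℓ_1; assume 0 < M < Δ. For any fixed j* ∈ {1,2}, the two-agent mechanism f defined by f(x_1, x_2) = (1,1) if max(x_1, x_2) < ℓ_1 + M, f(x_1, x_2) = (j*, j*) if max(x_1, x_2) = ℓ_1 + M, and f(x_1, x_2) = (2,2) if max(x_1, x_2) > ℓ_1 + M, is strategyproof and anonymous. -/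
/-- Type V mechanisms (threshold `ℓ₁ + M` on the position of the *rightmost*
agent) are strategyproof and anonymous, provided `0 < M < Δ`. -/
theorem typeV_strategyproof_anonymous (ℓ bc : Fin 2 → ℝ) (hℓ : ℓ 0 < ℓ 1)
    (hb : ∀ j, 0 < bc j)
    (M : ℝ) (hM : M = (ℓ 1 - ℓ 0) / 2 + bc 1 / 4 - bc 0 / 4)
    (hM0 : 0 < M) (hMΔ : M < ℓ 1 - ℓ 0)
    (jstar : Fin 2)
    (f : (Fin 2 → ℝ) → Fin 2 → Fin 2)
    (hf : ∀ x : Fin 2 → ℝ,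
      (max (x 0) (x 1) < ℓ 0 + M → ∀ i : Fin 2, f x i = 0) ∧
      (max (x 0) (x 1) = ℓ 0 + M → ∀ i : Fin 2, f x i = jstar) ∧
      (ℓ 0 + M < max (x 0) (x 1) → ∀ i : Fin 2, f x i = 1)) :
    Strategyproof ℓ bc f ∧ Anonymous f := by
  have h2 : ∀ j : Fin 2, j = 0 ∨ j = 1 := by decide
  have hconst : ∀ (x : Fin 2 → ℝ) (i : Fin 2), f x i = f x 0 := by
    intro x i
    rcases lt_trichotomy (max (x 0) (x 1)) (ℓ 0 + M) with h | h | h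
    · rw [(hf x).1 h i, (hf x).1 h 0]
    · rw [(hf x).2.1 h i, (hf x).2.1 h 0]
    · rw [(hf x).2.2 h i, (hf x).2.2 h 0]
  have hcost : ∀ (x : Fin 2 → ℝ) (y : ℝ) (i : Fin 2),
      agentCost ℓ bc y (f x) i = |y - ℓ (f x 0)| + bc (f x 0) / 2 := by
    intro x y i
    have hcnt : facCount (f x) (f x 0) = 2 := by
      unfold facCount
      have : (Finset.univ.filter fun k => f x k = f x 0) = Finset.univ := by
        ext k; simp [hconst x k]
      rw [this]; simp
    unfold agentCost
    rw [hconst x i, hcnt]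
    norm_num
  have L1 : ∀ y : ℝ, y ≤ ℓ 0 + M →
      |y - ℓ 0| + bc 0 / 2 ≤ |y - ℓ 1| + bc 1 / 2 := by
    intro y hy
    rcases abs_cases (y - ℓ 0) with ⟨h0, h0'⟩ | ⟨h0, h0'⟩ <;>
      rcases abs_cases (y - ℓ 1) with ⟨h1, h1'⟩ | ⟨h1, h1'⟩ <;>
      rw [h0, h1] <;> linarith [hb 0, hb 1]
  have L2 : ∀ y : ℝ, ℓ 0 + M ≤ y →
      |y - ℓ 1| + bc 1 / 2 ≤ |y - ℓ 0| + bc 0 / 2 := by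
    intro y hy
    rcases abs_cases (y - ℓ 0) with ⟨h0, h0'⟩ | ⟨h0, h0'⟩ <;>
      rcases abs_cases (y - ℓ 1) with ⟨h1, h1'⟩ | ⟨h1, h1'⟩ <;>
      rw [h0, h1] <;> linarith [hb 0, hb 1]
  constructor
  · -- Strategyproof
    intro x i xi'
    set x' := Function.update x i xi' with hx'def
    have hoth : ∃ k : Fin 2, k ≠ i ∧ x' k = x k ∧
        x i ≤ max (x 0) (x 1) ∧ x k ≤ max (x 0) (x 1) ∧
        (∀ z : ℝ, max (x 0) (x 1) ≤ max (x i) (x k)) ∧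
        x' k ≤ max (x' 0) (x' 1) := by
      fin_cases i
      · refine ⟨1, by decide, ?_, le_max_left _ _, le_max_right _ _, ?_, ?_⟩
        · simp [hx'def, Function.update]
        · intro z; simp
        · exact le_max_right _ _
      · refine ⟨0, by decide, ?_, le_max_right _ _, le_max_left _ _, ?_, ?_⟩
        · simp [hx'def, Function.update]
        · intro z; simp [max_comm]
        · exact le_max_left _ _
    obtain ⟨k, hki, hx'k, hxi_le, hxk_le, hmaxle, hx'k_le⟩ := hoth
    rw [hcost x (x i) i, hcost x' (x i) i]
    rcases lt_trichotomy (max (x 0) (x 1)) (ℓ 0 + M) with h | h | h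
    · -- truthful outcome: facility 0
      rw [(hf x).1 h 0]
      rcases h2 (f x' 0) with hj' | hj' <;> rw [hj']
      exact L1 (x i) (le_of_lt (lt_of_le_of_lt hxi_le h))
    · -- truthful outcome: jstar
      rw [(hf x).2.1 h 0]
      rcases h2 jstar with hjs | hjs <;> rw [hjs]
      · rcases h2 (f x' 0) with hj' | hj' <;> rw [hj']
        exact L1 (x i) (hxi_le.trans h.le)
      · rcases h2 (f x' 0) with hj' | hj' <;> rw [hj']
        · -- deviation yields facility 0, so new max < T, so x i = T
          have hm' : max (x' 0) (x' 1) < ℓ 0 + M := by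
            rcases lt_trichotomy (max (x' 0) (x' 1)) (ℓ 0 + M) with h' | h' | h'
            · exact h'
            · have := (hf x').2.1 h' 0
              rw [hj', hjs] at this
              exact absurd this (by decide)
            · have := (hf x').2.2 h' 0
              rw [hj'] at this
              exact absurd this (by decide)
          have hxkT : x k < ℓ 0 + M := lt_of_le_of_lt (hx'k ▸ hx'k_le) hm'
          have hyT : x i = ℓ 0 + M := by
            have hle : max (x 0) (x 1) ≤ max (x i) (x k) := hmaxle 0
            rcases le_or_gt (x i) (x k) with hc | hc
            · rw [max_eq_right hc] at hle; linarith [hle.trans_lt hxkT]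
            · rw [max_eq_left hc.le] at hle
              exact le_antisymm (hxi_le.trans h.le) (h ▸ hle)
          exact L2 (x i) hyT.ge
    · -- truthful outcome: facility 1
      rw [(hf x).2.2 h 0]
      rcases h2 (f x' 0) with hj' | hj' <;> rw [hj']
      · have hm' : max (x' 0) (x' 1) ≤ ℓ 0 + M := by
          rcases lt_trichotomy (max (x' 0) (x' 1)) (ℓ 0 + M) with h' | h' | h'
          · exact h'.le
          · exact h'.le
          · have := (hf x').2.2 h' 0
            rw [hj'] at this
            exact absurd this (by decide)
        have hxkT : x k ≤ ℓ 0 + M := (hx'k ▸ hx'k_le).trans hm'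
        have hyT : ℓ 0 + M < x i := by
          have hle : max (x 0) (x 1) ≤ max (x i) (x k) := hmaxle 0
          rcases le_or_gt (x i) (x k) with hc | hc
          · rw [max_eq_right hc] at hle; linarith [h.trans_le hle]
          · rw [max_eq_left hc.le] at hle; exact h.trans_le hle
        exact L2 (x i) hyT.le
  · -- Anonymous
    intro x₁ x₂
    have hmax : max (![x₂, x₁] 0) (![x₂, x₁] 1) = max (![x₁, x₂] 0) (![x₁, x₂] 1) := by
      simp [max_comm]
    rcases lt_trichotomy (max (![x₁, x₂] 0) (![x₁, x₂] 1)) (ℓ 0 + M) with h | h | h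
    · exact ⟨by rw [(hf _).1 (hmax ▸ h) 0, (hf _).1 h 1],
        by rw [(hf _).1 (hmax ▸ h) 1, (hf _).1 h 0]⟩
    · exact ⟨by rw [(hf _).2.1 (hmax ▸ h) 0, (hf _).2.1 h 1],
        by rw [(hf _).2.1 (hmax ▸ h) 1, (hf _).2.1 h 0]⟩
    · exact ⟨by rw [(hf _).2.2 (hmax ▸ h) 0, (hf _).2.2 h 1],
        by rw [(hf _).2.2 (hmax ▸ h) 1, (hf _).2.2 h 0]⟩
end

section
/- No strategyproof and anonymous mechanism achieves a bounded social cost approximation ratio, even for two agents and two facilities: for every real C > 0 there exists an environment with two facilities at ℓ_1 < ℓ_2 and building costs b_1, b_2 > 0 such that for every two-agent mechanism f : ℝ² → {1,2}² that is strategyproof and anonymous with respect to this environment, there exists a profile x ∈ ℝ² with SC(f(x)) ≥ C · OPT(x). -/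
/-- Social cost of an assignment `s` with respect to the true profile `x`. -/
noncomputable def socialCost (ℓ bc : Fin 2 → ℝ) (x : Fin 2 → ℝ)
    (s : Fin 2 → Fin 2) : ℝ :=
  ∑ i : Fin 2, agentCost ℓ bc (x i) s i

/-- Optimal (minimum) social cost over all four assignments. -/
noncomputable def OPT (ℓ bc : Fin 2 → ℝ) (x : Fin 2 → ℝ) : ℝ :=
  ⨅ s : Fin 2 → Fin 2, socialCost ℓ bc x s

/-! Take facilities at `0` and `1` with equal building cost `b`, where `2 C b ≤ 1`. A mechanism
with ratio below `C` must be optimal at the profiles `(0,0)`, `(1,1)` and `(0,1)`, since there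
the optimum costs at most `2b` and every other assignment at least `1`. Strategyproofness
propagates these values to `(0, y)` for `y < 1/2 + b/4` and to `(y, 1)` for `y > 1/2 - b/4`,
and together with anonymity to `(y, y)` for `y < 1/2`. At a profile `(y₂, y₁)` with
`1/2 - b/4 < y₂ < 1/2 < y₁ < 1/2 + b/4`, every assignment then gives some agent a profitable
misreport. -/

lemma fin2_fun_cases : ∀ s : Fin 2 → Fin 2,
    s = ![0, 0] ∨ s = ![0, 1] ∨ s = ![1, 0] ∨ s = ![1, 1] := by
  decide

lemma OPT_le_socialCost (ℓ bc : Fin 2 → ℝ) (x : Fin 2 → ℝ) (s : Fin 2 → Fin 2) :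
    OPT ℓ bc x ≤ socialCost ℓ bc x s :=
  ciInf_le (Set.finite_range _).bddBelow s

lemma eq_of_socialCost_lt_mul_OPT {ℓ bc : Fin 2 → ℝ} {x : Fin 2 → ℝ} {C : ℝ} (hC : 0 ≤ C)
    {s₀ t : Fin 2 → Fin 2} (hs₀ : ∀ s ≠ s₀, C * socialCost ℓ bc x s₀ ≤ socialCost ℓ bc x s)
    (ht : socialCost ℓ bc x t < C * OPT ℓ bc x) : t = s₀ := by
  by_contra hne
  have := mul_le_mul_of_nonneg_left (OPT_le_socialCost ℓ bc x s₀) hC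
  linarith [hs₀ t hne]

lemma Strategyproof.agentCost_fst_le {ℓ bc : Fin 2 → ℝ} {f : (Fin 2 → ℝ) → Fin 2 → Fin 2}
    (hf : Strategyproof ℓ bc f) (x₁ x₂ x₁' : ℝ) :
    agentCost ℓ bc x₁ (f ![x₁, x₂]) 0 ≤ agentCost ℓ bc x₁ (f ![x₁', x₂]) 0 := by
  have h := hf ![x₁, x₂] 0 x₁'
  have hupd : Function.update ![x₁, x₂] 0 x₁' = ![x₁', x₂] := by
    ext i; fin_cases i <;> simp
  rwa [hupd] at h

lemma Strategyproof.agentCost_snd_le {ℓ bc : Fin 2 → ℝ} {f : (Fin 2 → ℝ) → Fin 2 → Fin 2}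
    (hf : Strategyproof ℓ bc f) (x₁ x₂ x₂' : ℝ) :
    agentCost ℓ bc x₂ (f ![x₁, x₂]) 1 ≤ agentCost ℓ bc x₂ (f ![x₁, x₂']) 1 := by
  have h := hf ![x₁, x₂] 1 x₂'
  have hupd : Function.update ![x₁, x₂] 1 x₂' = ![x₁, x₂'] := by
    ext i; fin_cases i <;> simp
  rwa [hupd] at h

lemma Anonymous.apply_swap_of_eq_const {f : (Fin 2 → ℝ) → Fin 2 → Fin 2} (hf : Anonymous f)
    {x₁ x₂ : ℝ} {j : Fin 2} (h : f ![x₁, x₂] = ![j, j]) : f ![x₂, x₁] = ![j, j] := by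
  obtain ⟨h₀, h₁⟩ := hf x₁ x₂
  ext i; fin_cases i <;> simp [h₀, h₁, h]

lemma Anonymous.apply_diag_fst_eq_snd {f : (Fin 2 → ℝ) → Fin 2 → Fin 2} (hf : Anonymous f)
    (y : ℝ) : f ![y, y] 0 = f ![y, y] 1 :=
  (hf y y).1

lemma facCount_apply_self : ∀ (s : Fin 2 → Fin 2) (i : Fin 2),
    facCount s (s i) = if s 0 = s 1 then 2 else 1 := by
  decide

lemma agentCost_unit_interval (b : ℝ) {y : ℝ} (hy : y ∈ Set.Icc (0 : ℝ) 1)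
    (s : Fin 2 → Fin 2) (i : Fin 2) :
    agentCost ![0, 1] ![b, b] y s i =
      (if s i = 0 then y else 1 - y) + (if s 0 = s 1 then b / 2 else b) := by
  obtain ⟨hy₀, hy₁⟩ := hy
  rw [agentCost, facCount_apply_self]
  generalize s i = j
  fin_cases j <;> split_ifs <;> simp_all [abs_of_nonneg hy₀, abs_of_nonpos (sub_nonpos.2 hy₁)]

section UnitInterval

variable {b : ℝ} {f : (Fin 2 → ℝ) → Fin 2 → Fin 2}

lemma apply_corners_eq_of_ratio_lt {C : ℝ} (hC : 0 ≤ C) (hb : 0 ≤ b) (hCb : 2 * C * b ≤ 1)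
    (hf : ∀ x, socialCost ![0, 1] ![b, b] x (f x) < C * OPT ![0, 1] ![b, b] x) :
    f ![0, 0] = ![0, 0] ∧ f ![1, 1] = ![1, 1] ∧ f ![0, 1] = ![0, 1] := by
  refine ⟨?_, ?_, ?_⟩ <;> refine eq_of_socialCost_lt_mul_OPT hC (fun s hs => ?_) (hf _) <;>
    rcases fin2_fun_cases s with rfl | rfl | rfl | rfl <;>
    first
    | exact absurd rfl hs
    | simp [socialCost, Fin.sum_univ_two, agentCost_unit_interval]; nlinarith

lemma apply_zero_left_eq (hb : 0 < b) (hSP : Strategyproof ![0, 1] ![b, b] f)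
    (h00 : f ![0, 0] = ![0, 0]) (h01 : f ![0, 1] = ![0, 1]) {y : ℝ}
    (hy : y ∈ Set.Icc (0 : ℝ) 1) (hy' : y < 1 / 2 + b / 4) : f ![0, y] = ![0, 0] := by
  rcases fin2_fun_cases (f ![0, y]) with h | h | h | h
  · exact h
  · have := hSP.agentCost_snd_le 0 y 0
    simp [h, h00, agentCost_unit_interval, hy] at this
    linarith
  · have := hSP.agentCost_snd_le 0 y 0
    simp [h, h00, agentCost_unit_interval, hy] at this
    linarith
  · have := hSP.agentCost_snd_le 0 1 y
    simp [h, h01, agentCost_unit_interval] at this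
    linarith

lemma apply_one_right_eq (hb : 0 < b) (hSP : Strategyproof ![0, 1] ![b, b] f)
    (h11 : f ![1, 1] = ![1, 1]) (h01 : f ![0, 1] = ![0, 1]) {y : ℝ}
    (hy : y ∈ Set.Icc (0 : ℝ) 1) (hy' : 1 / 2 - b / 4 < y) : f ![y, 1] = ![1, 1] := by
  rcases fin2_fun_cases (f ![y, 1]) with h | h | h | h
  · have := hSP.agentCost_fst_le 0 1 y
    simp [h, h01, agentCost_unit_interval] at this
    linarith
  · have := hSP.agentCost_fst_le y 1 1
    simp [h, h11, agentCost_unit_interval, hy] at this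
    linarith
  · have := hSP.agentCost_fst_le y 1 1
    simp [h, h11, agentCost_unit_interval, hy] at this
    linarith
  · exact h

lemma apply_diag_eq (hSP : Strategyproof ![0, 1] ![b, b] f) (hAn : Anonymous f)
    {y : ℝ} (hy0 : f ![y, 0] = ![0, 0]) (hy : y ∈ Set.Icc (0 : ℝ) 1) (hy' : y < 1 / 2) :
    f ![y, y] = ![0, 0] := by
  have hdiag := hAn.apply_diag_fst_eq_snd y
  rcases fin2_fun_cases (f ![y, y]) with h | h | h | h
  · exact h
  · simp [h] at hdiag
  · simp [h] at hdiag
  · have := hSP.agentCost_snd_le y y 0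
    simp [h, hy0, agentCost_unit_interval, hy] at this
    linarith

lemma false_of_straddling (hb : 0 < b) (hSP : Strategyproof ![0, 1] ![b, b] f)
    {y₁ y₂ : ℝ} (hy₁ : y₁ ∈ Set.Icc (0 : ℝ) 1) (hy₂ : y₂ ∈ Set.Icc (0 : ℝ) 1)
    (hy₂₁ : y₂ < 1 / 2) (hy₁₂ : 1 / 2 < y₁)
    (h0 : f ![0, y₁] = ![0, 0]) (h1 : f ![y₂, 1] = ![1, 1]) (hdiag : f ![y₂, y₂] = ![0, 0]) :
    False := by
  rcases fin2_fun_cases (f ![y₂, y₁]) with h | h | h | h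
  · have := hSP.agentCost_snd_le y₂ y₁ 1
    simp [h, h1, agentCost_unit_interval, hy₁] at this
    linarith
  · have := hSP.agentCost_fst_le y₂ y₁ 0
    simp [h, h0, agentCost_unit_interval, hy₂] at this
    linarith
  · have := hSP.agentCost_snd_le y₂ y₁ y₂
    simp [h, hdiag, agentCost_unit_interval, hy₁] at this
    linarith
  · have := hSP.agentCost_fst_le y₂ y₁ 0
    simp [h, h0, agentCost_unit_interval, hy₂] at this
    linarith

theorem false_of_strategyproof_of_anonymous (hb : 0 < b)
    (hSP : Strategyproof ![0, 1] ![b, b] f) (hAn : Anonymous f)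
    (h00 : f ![0, 0] = ![0, 0]) (h11 : f ![1, 1] = ![1, 1]) (h01 : f ![0, 1] = ![0, 1]) :
    False := by
  obtain ⟨ε, hε, hεb, hε1⟩ : ∃ ε : ℝ, 0 < ε ∧ ε < b / 4 ∧ ε ≤ 1 / 2 :=
    ⟨min b 1 / 8, by positivity, by linarith [min_le_left b 1], by linarith [min_le_right b 1]⟩
  have hy₁ : 1 / 2 + ε ∈ Set.Icc (0 : ℝ) 1 := ⟨by linarith, by linarith⟩
  have hy₂ : 1 / 2 - ε ∈ Set.Icc (0 : ℝ) 1 := ⟨by linarith, by linarith⟩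
  have h0y₂ := apply_zero_left_eq hb hSP h00 h01 hy₂ (by linarith)
  refine false_of_straddling hb hSP hy₁ hy₂ (by linarith) (by linarith)
    (apply_zero_left_eq hb hSP h00 h01 hy₁ (by linarith))
    (apply_one_right_eq hb hSP h11 h01 hy₂ (by linarith))
    (apply_diag_eq hSP hAn (hAn.apply_swap_of_eq_const h0y₂) hy₂ (by linarith))

end UnitInterval

/-- No strategyproof and anonymous mechanism has a bounded social cost
approximation ratio, even for two agents and two facilities: for every `C > 0`
there is an environment such that every strategyproof and anonymous mechanism
admits a profile on which its social cost is at least `C` times the optimum. -/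
theorem no_bounded_approximation (C : ℝ) (hC : 0 < C) :
    ∃ ℓ bc : Fin 2 → ℝ, ℓ 0 < ℓ 1 ∧ (∀ j, 0 < bc j) ∧
      ∀ f : (Fin 2 → ℝ) → Fin 2 → Fin 2,
        Strategyproof ℓ bc f → Anonymous f →
        ∃ x : Fin 2 → ℝ, C * OPT ℓ bc x ≤ socialCost ℓ bc x (f x) := by
  have hb : 0 < 1 / (2 * C) := by positivity
  refine ⟨![0, 1], ![1 / (2 * C), 1 / (2 * C)], by simp, fun j => by fin_cases j <;> simpa,
    fun f hSP hAn => ?_⟩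
  by_contra! hf
  obtain ⟨h00, h11, h01⟩ :=
    apply_corners_eq_of_ratio_lt hC.le hb.le (mul_one_div_cancel (by positivity)).le hf
  exact false_of_strategyproof_of_anonymous hb hSP hAn h00 h11 h01
end

section
/- For two agents and two facilities, every strategyproof and anonymous mechanism always assigns both agents to the same facility: if f : ℝ² → {1,2}² is strategyproof and anonymous for an environment with two facilities at ℓ_1 < ℓ_2 and building costs b_1, b_2 > 0, then f_1(x) = f_2(x) for every profile x ∈ ℝ². -/
lemma fin2_cases' (a b v : Fin 2) (hab : a ≠ b) : v = a ∨ v = b := by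
  revert a b v; decide

lemma cost0_pool (ℓ bc : Fin 2 → ℝ) (y : ℝ) (s : Fin 2 → Fin 2) (j : Fin 2)
    (h0 : s 0 = j) (h1 : s 1 = j) :
    agentCost ℓ bc y s 0 = |y - ℓ j| + bc j / 2 := by
  simp [agentCost, facCount_eq, h0, h1]

lemma cost0_alone (ℓ bc : Fin 2 → ℝ) (y : ℝ) (s : Fin 2 → Fin 2) (j : Fin 2)
    (h0 : s 0 = j) (h1 : s 1 ≠ j) :
    agentCost ℓ bc y s 0 = |y - ℓ j| + bc j := by
  simp [agentCost, facCount_eq, h0, h1]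

lemma cost1_pool (ℓ bc : Fin 2 → ℝ) (y : ℝ) (s : Fin 2 → Fin 2) (j : Fin 2)
    (h1 : s 1 = j) (h0 : s 0 = j) :
    agentCost ℓ bc y s 1 = |y - ℓ j| + bc j / 2 := by
  simp [agentCost, facCount_eq, h0, h1]

lemma cost1_alone (ℓ bc : Fin 2 → ℝ) (y : ℝ) (s : Fin 2 → Fin 2) (j : Fin 2)
    (h1 : s 1 = j) (h0 : s 0 ≠ j) :
    agentCost ℓ bc y s 1 = |y - ℓ j| + bc j := by
  simp [agentCost, facCount_eq, h0, h1]

lemma upd0 (y z t : ℝ) : Function.update ![y, z] 0 t = ![t, z] := by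
  funext i; fin_cases i <;> simp [Function.update]

lemma upd1 (y z t : ℝ) : Function.update ![y, z] 1 t = ![y, t] := by
  funext i; fin_cases i <;> simp [Function.update]

lemma exists_pt (A B v : ℝ) (h : |v| ≤ |B - A|) : ∃ w, |w - B| - |w - A| = v := by
  rcases le_total A B with hAB | hAB
  · refine ⟨(A + B - v) / 2, ?_⟩
    rw [abs_of_nonneg (by linarith : (0:ℝ) ≤ B - A), abs_le] at h
    rw [abs_of_nonpos (by linarith), abs_of_nonneg (by linarith)]
    ring
  · refine ⟨(A + B + v) / 2, ?_⟩
    rw [abs_of_nonpos (by linarith : B - A ≤ 0), abs_le] at h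
    rw [abs_of_nonneg (by linarith), abs_of_nonpos (by linarith)]
    ring

/-- Every strategyproof and anonymous two-agent mechanism always assigns both
agents to the same facility. -/
theorem sp_anonymous_same_facility (ℓ bc : Fin 2 → ℝ) (hℓ : ℓ 0 < ℓ 1)
    (hb : ∀ j, 0 < bc j)
    (f : (Fin 2 → ℝ) → Fin 2 → Fin 2)
    (hsp : Strategyproof ℓ bc f) (han : Anonymous f)
    (x : Fin 2 → ℝ) :
    f x 0 = f x 1 := by
  by_contra hne
  have hx : x = ![x 0, x 1] := by funext i; fin_cases i <;> rfl
  rw [hx] at hne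
  set x1 := x 0 with hx1
  set x2 := x 1 with hx2
  obtain ⟨a, ha⟩ : ∃ a, f ![x1, x2] 0 = a := ⟨_, rfl⟩
  obtain ⟨b, hbb⟩ : ∃ b, f ![x1, x2] 1 = b := ⟨_, rfl⟩
  have hab : a ≠ b := by rw [ha, hbb] at hne; exact hne
  -- SP in the two handy forms
  have SP0 : ∀ y z t : ℝ,
      agentCost ℓ bc y (f ![y, z]) 0 ≤ agentCost ℓ bc y (f ![t, z]) 0 := by
    intro y z t
    have h := hsp ![y, z] 0 t
    rw [upd0] at h
    simpa using h
  have SP1 : ∀ y z t : ℝ,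
      agentCost ℓ bc z (f ![y, z]) 1 ≤ agentCost ℓ bc z (f ![y, t]) 1 := by
    intro y z t
    have h := hsp ![y, z] 1 t
    rw [upd1] at h
    simpa using h
  -- diagonal is pooled
  have hdiag : ∀ t : ℝ, f ![t, t] 1 = f ![t, t] 0 := fun t => (han t t).2
  have hp := hb a
  have hq := hb b
  -- agent 2 of x cannot get b alone-cost facts
  have hs0b : f ![x1, x2] 0 ≠ b := by rw [ha]; exact hab
  have hs1a : f ![x1, x2] 1 ≠ a := by rw [hbb]; exact fun h => hab h.symm
  -- the diagonal at x1 is pooled at a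
  have hd1_0 : f ![x1, x1] 0 = a := by
    rcases fin2_cases' a b (f ![x1, x1] 0) hab with h | h
    · exact h
    · exfalso
      have H := SP1 x1 x2 x1
      rw [cost1_alone ℓ bc x2 (f ![x1, x2]) b hbb hs0b,
          cost1_pool ℓ bc x2 (f ![x1, x1]) b ((hdiag x1).trans h) h] at H
      linarith
  have hd1_1 : f ![x1, x1] 1 = a := (hdiag x1).trans hd1_0
  -- the diagonal at x2 is pooled at b
  have hd2_0 : f ![x2, x2] 0 = b := by
    rcases fin2_cases' a b (f ![x2, x2] 0) hab with h | h
    · exfalso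
      have H := SP0 x1 x2 x2
      rw [cost0_alone ℓ bc x1 (f ![x1, x2]) a ha hs1a,
          cost0_pool ℓ bc x1 (f ![x2, x2]) a h ((hdiag x2).trans h)] at H
      linarith
    · exact h
  have hd2_1 : f ![x2, x2] 1 = b := (hdiag x2).trans hd2_0
  -- key inequalities E1, E2
  have E1 : |x1 - ℓ a| + bc a ≤ |x1 - ℓ b| + bc b / 2 := by
    have H := SP0 x1 x2 x2
    rwa [cost0_alone ℓ bc x1 (f ![x1, x2]) a ha hs1a,
        cost0_pool ℓ bc x1 (f ![x2, x2]) b hd2_0 hd2_1] at H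
  have E2 : |x2 - ℓ b| + bc b ≤ |x2 - ℓ a| + bc a / 2 := by
    have H := SP1 x1 x2 x1
    rwa [cost1_alone ℓ bc x2 (f ![x1, x2]) b hbb hs0b,
        cost1_pool ℓ bc x2 (f ![x1, x1]) a hd1_1 hd1_0] at H
  -- distance bounds
  set p := bc a with hpdef
  set q := bc b with hqdef
  set Δ := |ℓ b - ℓ a| with hΔ
  have tri1 : |x1 - ℓ b| - |x1 - ℓ a| ≤ Δ := by
    have h := abs_sub_abs_le_abs_sub (x1 - ℓ b) (x1 - ℓ a)
    have h2 : (x1 - ℓ b) - (x1 - ℓ a) = -(ℓ b - ℓ a) := by ring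
    rw [h2, abs_neg] at h
    exact h
  have tri2 : |x2 - ℓ a| - |x2 - ℓ b| ≤ Δ := by
    have h := abs_sub_abs_le_abs_sub (x2 - ℓ a) (x2 - ℓ b)
    have h2 : (x2 - ℓ a) - (x2 - ℓ b) = ℓ b - ℓ a := by ring
    rw [h2] at h
    exact h
  have hA : p - q / 2 ≤ Δ := by linarith
  have hB : -Δ ≤ p / 2 - q := by linarith
  -- choose v1 < (p-q)/2 < v2
  set v1 := (max (-Δ) (p / 2 - q) + (p - q) / 2) / 2 with hv1def
  set v2 := ((p - q) / 2 + min Δ (p - q / 2)) / 2 with hv2def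
  have hmax1 : -Δ ≤ max (-Δ) (p / 2 - q) := le_max_left _ _
  have hmax2 : p / 2 - q ≤ max (-Δ) (p / 2 - q) := le_max_right _ _
  have hmaxlt : max (-Δ) (p / 2 - q) < (p - q) / 2 :=
    max_lt (by linarith) (by linarith)
  have hmin1 : min Δ (p - q / 2) ≤ Δ := min_le_left _ _
  have hmin2 : min Δ (p - q / 2) ≤ p - q / 2 := min_le_right _ _
  have hminlt : (p - q) / 2 < min Δ (p - q / 2) :=
    lt_min (by linarith) (by linarith)
  have hv1lt : v1 < (p - q) / 2 := by rw [hv1def]; linarith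
  have hv1gt : p / 2 - q < v1 := by rw [hv1def]; linarith
  have hv2gt : (p - q) / 2 < v2 := by rw [hv2def]; linarith
  have hv2lt : v2 < p - q / 2 := by rw [hv2def]; linarith
  have hv1abs : |v1| ≤ Δ := by
    rw [abs_le]; constructor <;> [skip; skip] <;> rw [hv1def] <;> linarith
  have hv2abs : |v2| ≤ Δ := by
    rw [abs_le]; constructor <;> [skip; skip] <;> rw [hv2def] <;> linarith
  obtain ⟨w1, hw1⟩ := exists_pt (ℓ a) (ℓ b) v1 hv1abs
  obtain ⟨w2, hw2⟩ := exists_pt (ℓ a) (ℓ b) v2 hv2abs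
  -- f ![x1, w1] = (a, a)
  have h5a : f ![x1, w1] 0 = a ∧ f ![x1, w1] 1 = a := by
    rcases fin2_cases' a b (f ![x1, w1] 0) hab with h0 | h0 <;>
      rcases fin2_cases' a b (f ![x1, w1] 1) hab with h1 | h1
    · exact ⟨h0, h1⟩
    · exfalso
      have H := SP1 x1 w1 x1
      rw [cost1_alone ℓ bc w1 (f ![x1, w1]) b h1 (by rw [h0]; exact hab),
          cost1_pool ℓ bc w1 (f ![x1, x1]) a hd1_1 hd1_0] at H
      -- φ(w1) > 0 : |w1-ℓb| + q > |w1-ℓa| + p/2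
      linarith
    · exfalso
      have H := SP1 x1 w1 x1
      rw [cost1_alone ℓ bc w1 (f ![x1, w1]) a h1 (by rw [h0]; exact fun h => hab h.symm),
          cost1_pool ℓ bc w1 (f ![x1, x1]) a hd1_1 hd1_0] at H
      linarith
    · exfalso
      have H := SP1 x1 x2 w1
      rw [cost1_alone ℓ bc x2 (f ![x1, x2]) b hbb hs0b,
          cost1_pool ℓ bc x2 (f ![x1, w1]) b h1 h0] at H
      linarith
  -- f ![w2, x2] = (b, b)
  have h5b : f ![w2, x2] 0 = b ∧ f ![w2, x2] 1 = b := by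
    rcases fin2_cases' a b (f ![w2, x2] 0) hab with h0 | h0 <;>
      rcases fin2_cases' a b (f ![w2, x2] 1) hab with h1 | h1
    · exfalso
      have H := SP0 x1 x2 w2
      rw [cost0_alone ℓ bc x1 (f ![x1, x2]) a ha hs1a,
          cost0_pool ℓ bc x1 (f ![w2, x2]) a h0 h1] at H
      linarith
    · exfalso
      have H := SP0 w2 x2 x2
      rw [cost0_alone ℓ bc w2 (f ![w2, x2]) a h0 (by rw [h1]; exact fun h => hab h.symm),
          cost0_pool ℓ bc w2 (f ![x2, x2]) b hd2_0 hd2_1] at H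
      -- ψ(w2) > 0 : |w2-ℓa| + p > |w2-ℓb| + q/2
      linarith
    · exfalso
      have H := SP0 w2 x2 x2
      rw [cost0_alone ℓ bc w2 (f ![w2, x2]) b h0 (by rw [h1]; exact hab),
          cost0_pool ℓ bc w2 (f ![x2, x2]) b hd2_0 hd2_1] at H
      linarith
    · exact ⟨h0, h1⟩
  -- final contradiction at profile (w2, w1)
  rcases fin2_cases' a b (f ![w2, w1] 0) hab with h0 | h0 <;>
    rcases fin2_cases' a b (f ![w2, w1] 1) hab with h1 | h1
  · -- (a, a) : agent 2 deviates to x2 and gets (b,2), cheaper since v1 < (p-q)/2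
    have H := SP1 w2 w1 x2
    rw [cost1_pool ℓ bc w1 (f ![w2, w1]) a h1 h0,
        cost1_pool ℓ bc w1 (f ![w2, x2]) b h5b.2 h5b.1] at H
    linarith
  · -- (a, b) : agent 1 alone at a deviates to x1, gets (a,2)
    have H := SP0 w2 w1 x1
    rw [cost0_alone ℓ bc w2 (f ![w2, w1]) a h0 (by rw [h1]; exact fun h => hab h.symm),
        cost0_pool ℓ bc w2 (f ![x1, w1]) a h5a.1 h5a.2] at H
    linarith
  · -- (b, a) : agent 1 alone at b deviates to x1, gets (a,2), cheaper since v2 > (p-q)/2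
    have H := SP0 w2 w1 x1
    rw [cost0_alone ℓ bc w2 (f ![w2, w1]) b h0 (by rw [h1]; exact hab),
        cost0_pool ℓ bc w2 (f ![x1, w1]) a h5a.1 h5a.2] at H
    linarith
  · -- (b, b) : agent 1 pooled at b deviates to x1, gets (a,2)
    have H := SP0 w2 w1 x1
    rw [cost0_pool ℓ bc w2 (f ![w2, w1]) b h0 h1,
        cost0_pool ℓ bc w2 (f ![x1, w1]) a h5a.1 h5a.2] at H
    linarith
end
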